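/- arXiv:0904.3509 — 3 statements merged into one kernel-verified Lean document; each statement's English description precedes it below -/
import Mathlib

section
/- Let 𝓗 and H be complex Hilbert spaces and S : 𝓗 → H a continuous linear map. Then S is surjective if and only if the self-adjoint nonnegative operator S∘S† is coercive, i.e. there exists C > 0 such that re⟪(S∘S†)h, h⟫ ≥ C‖h‖² for all h ∈ H. (This is the characterization of exact controllability by the condition M_T = 𝓑𝓑* ≥ C·Id.) -/
/-!
Write `T = S†`, so that `re ⟪(S ∘ T) h, h⟫ = ‖T h‖²` and coercivity says `T` is bounded below.
If `S` is surjective, the open mapping theorem gives preimages `S g = h` with `‖g‖ ≤ C ‖h‖`,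
whence `‖h‖² = ⟪g, T h⟫ ≤ C ‖h‖ ‖T h‖`. Conversely, a coercive operator on a Hilbert space is
invertible (it is bounded below, so has closed range, and its range has trivial orthogonal
complement), and the range of `S ∘ T` is contained in that of `S`.
-/

open ContinuousLinearMap RCLike

open scoped InnerProductSpace

namespace ContinuousLinearMap

variable {𝕜 E F : Type*} [RCLike 𝕜]
  [NormedAddCommGroup E] [InnerProductSpace 𝕜 E] [CompleteSpace E]
  [NormedAddCommGroup F] [InnerProductSpace 𝕜 F] [CompleteSpace F]

theorem surjective_of_forall_le_re_inner (f : F →L[𝕜] F) {C : ℝ} (hC : 0 < C)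
    (h : ∀ x, C * ‖x‖ ^ 2 ≤ re ⟪f x, x⟫_𝕜) : Function.Surjective f := by
  have hunit : IsUnit f := isUnit_of_forall_le_norm_inner_map f (c := ⟨C, hC.le⟩) hC fun x =>
    calc ‖x‖ ^ 2 * C = C * ‖x‖ ^ 2 := mul_comm _ _
      _ ≤ re ⟪f x, x⟫_𝕜 := h x
      _ ≤ ‖⟪f x, x⟫_𝕜‖ := re_le_norm _
  exact (isUnit_iff_bijective.mp hunit).2

theorem re_inner_comp_adjoint_apply_self (S : E →L[𝕜] F) (y : F) :
    re ⟪(S ∘L adjoint S) y, y⟫_𝕜 = ‖adjoint S y‖ ^ 2 := by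
  rw [apply_norm_sq_eq_inner_adjoint_left, adjoint_adjoint]

theorem exists_norm_le_mul_norm_adjoint_apply_of_surjective (S : E →L[𝕜] F)
    (hS : Function.Surjective S) : ∃ C > 0, ∀ y, ‖y‖ ≤ C * ‖adjoint S y‖ := by
  obtain ⟨C, hC, hpre⟩ := S.exists_preimage_norm_le hS
  refine ⟨C, hC, fun y => ?_⟩
  obtain ⟨x, rfl, hx⟩ := hpre y
  have hsq : ‖S x‖ * ‖S x‖ ≤ ‖S x‖ * (C * ‖adjoint S (S x)‖) :=
    calc ‖S x‖ * ‖S x‖ = ‖⟪x, adjoint S (S x)⟫_𝕜‖ := by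
          rw [adjoint_inner_right, ← inner_self_re_eq_norm, inner_self_eq_norm_mul_norm]
      _ ≤ ‖x‖ * ‖adjoint S (S x)‖ := norm_inner_le_norm _ _
      _ ≤ C * ‖S x‖ * ‖adjoint S (S x)‖ := by gcongr
      _ = ‖S x‖ * (C * ‖adjoint S (S x)‖) := by ring
  rcases (norm_nonneg (S x)).eq_or_lt with hzero | hpos
  · rw [← hzero]
    positivity
  · exact le_of_mul_le_mul_left hsq hpos

end ContinuousLinearMap

/-- Exact controllability is characterized by the coercivity
`M_T = 𝓑𝓑* ≥ C·Id` of the self-adjoint nonnegative operator `S ∘ S†`. -/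
theorem surjective_iff_coercive_self_comp_adjoint
    {𝓗 H : Type*}
    [NormedAddCommGroup 𝓗] [InnerProductSpace ℂ 𝓗] [CompleteSpace 𝓗]
    [NormedAddCommGroup H] [InnerProductSpace ℂ H] [CompleteSpace H]
    (S : 𝓗 →L[ℂ] H) :
    Function.Surjective S ↔
      ∃ C > 0, ∀ h : H,
        C * ‖h‖ ^ 2 ≤ (inner ℂ ((S.comp (ContinuousLinearMap.adjoint S)) h) h : ℂ).re := by
  constructor
  · intro hS
    obtain ⟨C, hC, hbound⟩ := S.exists_norm_le_mul_norm_adjoint_apply_of_surjective hS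
    refine ⟨(C ^ 2)⁻¹, by positivity, fun h => ?_⟩
    rw [← RCLike.re_eq_complex_re, re_inner_comp_adjoint_apply_self,
      inv_mul_le_iff₀ (by positivity), ← mul_pow]
    exact pow_le_pow_left₀ (norm_nonneg h) (hbound h) 2
  · rintro ⟨C, hC, hcoercive⟩
    have hsurj := (S ∘L adjoint S).surjective_of_forall_le_re_inner hC hcoercive
    exact Function.Surjective.of_comp hsurj
end

section
/- Let H be a complex Hilbert space, M : H → H a continuous linear self-adjoint map, and C > 0 a constant such that re⟪Mu, u⟫ ≥ C‖u‖² for all u ∈ H, so that M has a continuous inverse Λ = M⁻¹. Let (P_n)_{n∈ℕ} be a sequence of orthogonal projections of H onto finite-dimensional subspaces V_n with V_n ⊆ V_{n+1} for all n and P_n x → x as n → ∞ for every x ∈ H. Fix f ∈ H, and for each n let g_n be the unique element of V_n satisfying P_n(M g_n) = P_n f. Then g_n converges in norm to Λ f as n → ∞. (This is the convergence of the spectral Galerkin approximation M_{T,ω}^{-1}(Π_ω f) to the optimal control operator Λ(f) as the cutoff frequency ω → ∞.) -/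
/-!
Céa's lemma: since `M g_n - M (Λ f)` is orthogonal to `V_n`, coercivity gives the quasi-optimal
bound `‖Λ f - g_n‖ ≤ (1 + ‖M‖ / C) ‖Λ f - w‖` for every `w ∈ V_n`. Taking `w = P_n (Λ f)`, the
right-hand side tends to zero because the projections converge strongly to the identity.
-/

open Filter Topology

section Galerkin

variable {𝕜 E : Type*} [RCLike 𝕜] [NormedAddCommGroup E] [InnerProductSpace 𝕜 E]

theorem sub_mem_orthogonal_of_orthogonalProjectionOnto_eq {K : Submodule 𝕜 E}
    [K.HasOrthogonalProjection] {x y : E}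
    (h : K.orthogonalProjectionOnto x = K.orthogonalProjectionOnto y) : x - y ∈ Kᗮ := by
  rw [← Submodule.orthogonalProjectionOnto_eq_zero_iff, map_sub, h, sub_self]

theorem norm_sub_le_of_coercive_of_mem_orthogonal {M : E →L[𝕜] E} {C : ℝ} (hC : 0 < C)
    (hcoer : ∀ u : E, C * ‖u‖ ^ 2 ≤ RCLike.re (inner 𝕜 (M u) u)) {K : Submodule 𝕜 E}
    {u g w : E} (hg : g ∈ K) (hw : w ∈ K) (horth : M (g - u) ∈ Kᗮ) :
    ‖g - w‖ ≤ ‖M‖ / C * ‖u - w‖ := by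
  set e := g - w
  have he : e ∈ K := K.sub_mem hg hw
  have hMe : M e = M (g - u) + M (u - w) := by rw [← map_add, sub_add_sub_cancel]
  have hkey : C * ‖e‖ ^ 2 ≤ ‖M‖ * ‖u - w‖ * ‖e‖ :=
    calc C * ‖e‖ ^ 2 ≤ RCLike.re (inner 𝕜 (M e) e) := hcoer e
      _ = RCLike.re (inner 𝕜 (M (u - w)) e) := by
        rw [hMe, inner_add_left, Submodule.inner_left_of_mem_orthogonal he horth, zero_add]
      _ ≤ ‖inner 𝕜 (M (u - w)) e‖ := RCLike.re_le_norm _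
      _ ≤ ‖M (u - w)‖ * ‖e‖ := norm_inner_le_norm _ _
      _ ≤ ‖M‖ * ‖u - w‖ * ‖e‖ := by gcongr; exact M.le_opNorm _
  rcases (norm_nonneg e).eq_or_lt with he0 | he0
  · rw [← he0]; positivity
  · have hCe : C * ‖e‖ ≤ ‖M‖ * ‖u - w‖ := le_of_mul_le_mul_right (by nlinarith) he0
    rwa [div_mul_eq_mul_div, le_div_iff₀' hC]

theorem cea_norm_sub_le {M : E →L[𝕜] E} {C : ℝ} (hC : 0 < C)
    (hcoer : ∀ u : E, C * ‖u‖ ^ 2 ≤ RCLike.re (inner 𝕜 (M u) u)) {K : Submodule 𝕜 E}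
    {u g w : E} (hg : g ∈ K) (hw : w ∈ K) (horth : M (g - u) ∈ Kᗮ) :
    ‖u - g‖ ≤ (1 + ‖M‖ / C) * ‖u - w‖ :=
  calc ‖u - g‖ ≤ ‖u - w‖ + ‖g - w‖ := by
        rw [norm_sub_rev g w]; exact norm_sub_le_norm_sub_add_norm_sub u w g
    _ ≤ ‖u - w‖ + ‖M‖ / C * ‖u - w‖ := by
      gcongr; exact norm_sub_le_of_coercive_of_mem_orthogonal hC hcoer hg hw horth
    _ = (1 + ‖M‖ / C) * ‖u - w‖ := by ring

end Galerkin

theorem galerkin_convergence_general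
    {H : Type*} [NormedAddCommGroup H] [InnerProductSpace ℂ H]
    (M Λ : H →L[ℂ] H) (C : ℝ) (hC : 0 < C)
    (hcoer : ∀ u : H, C * ‖u‖ ^ 2 ≤ (inner ℂ (M u) u : ℂ).re)
    (hinv₂ : ∀ x : H, M (Λ x) = x)
    (V : ℕ → Submodule ℂ H) [∀ n, FiniteDimensional ℂ (V n)]
    (hconv : ∀ x : H, Tendsto (fun n => (Submodule.orthogonalProjectionOnto (V n) x : H)) atTop (𝓝 x))
    (f : H) (g : ℕ → H)
    (hg : ∀ n, g n ∈ V n ∧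
      Submodule.orthogonalProjectionOnto (V n) (M (g n)) = Submodule.orthogonalProjectionOnto (V n) f) :
    Tendsto g atTop (𝓝 (Λ f)) := by
  set u := Λ f
  have horth (n : ℕ) : M (g n - u) ∈ (V n)ᗮ := by
    rw [map_sub, hinv₂]
    exact sub_mem_orthogonal_of_orthogonalProjectionOnto_eq (hg n).2
  have hbound (n : ℕ) :
      ‖u - g n‖ ≤ (1 + ‖M‖ / C) * ‖u - (Submodule.orthogonalProjectionOnto (V n) u : H)‖ :=
    cea_norm_sub_le hC hcoer (hg n).1 (Submodule.coe_mem _) (horth n)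
  have hproj : Tendsto (fun n => ‖u - (Submodule.orthogonalProjectionOnto (V n) u : H)‖)
      atTop (𝓝 0) := by
    simpa using ((hconv u).const_sub u).norm
  have hlim := hproj.const_mul (1 + ‖M‖ / C)
  rw [mul_zero] at hlim
  rw [tendsto_iff_norm_sub_tendsto_zero]
  exact squeeze_zero (fun _ => norm_nonneg _) (fun n => (norm_sub_rev _ _).trans_le (hbound n)) hlim

/-- Convergence of the spectral Galerkin approximation: if `M` is self-adjoint and coercive,
`Λ = M⁻¹`, and `(V_n)` are nested finite-dimensional subspaces whose orthogonal projections
converge strongly to the identity, then the Galerkin solutions `g_n ∈ V_n` of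
`P_n (M g_n) = P_n f` converge in norm to `Λ f`. -/
theorem galerkin_convergence
    {H : Type*} [NormedAddCommGroup H] [InnerProductSpace ℂ H] [CompleteSpace H]
    (M Λ : H →L[ℂ] H) (hsa : IsSelfAdjoint M) (C : ℝ) (hC : 0 < C)
    (hcoer : ∀ u : H, C * ‖u‖ ^ 2 ≤ (inner ℂ (M u) u : ℂ).re)
    (hinv₁ : ∀ x : H, Λ (M x) = x) (hinv₂ : ∀ x : H, M (Λ x) = x)
    (V : ℕ → Submodule ℂ H) [∀ n, FiniteDimensional ℂ (V n)]
    (hmono : ∀ n, V n ≤ V (n + 1))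
    (hconv : ∀ x : H, Tendsto (fun n => (Submodule.orthogonalProjectionOnto (V n) x : H)) atTop (𝓝 x))
    (f : H) (g : ℕ → H)
    (hg : ∀ n, g n ∈ V n ∧
      Submodule.orthogonalProjectionOnto (V n) (M (g n)) = Submodule.orthogonalProjectionOnto (V n) f) :
    Tendsto g atTop (𝓝 (Λ f)) :=
  galerkin_convergence_general M Λ C hC hcoer hinv₂ V hconv f g hg
end

section
/- Let H be a complex Hilbert space with a Hilbert (orthonormal) basis (e_j)_{j∈ℕ}, and let ω : ℕ → ℝ satisfy ω_j > 0 for all j. Fix s ≥ 0 and suppose T_s : H → H is a continuous linear map with T_s e_j = ω_j^{-s} e_j for every j, and Λ, Λ_s : H → H are continuous linear maps with Λ ∘ T_s = T_s ∘ Λ_s. Let 0 < ω₀ ≤ ω and let Π_ω denote the orthogonal projection of H onto the closed span of {e_j : ω_j ≤ ω}. Then for every f in the linear span of the finite set {e_j : ω_j ≤ ω₀} one has ‖(Id − Π_ω)(Λ f)‖ ≤ ‖Λ_s‖ (ω₀/ω)^s ‖f‖, where ‖Λ_s‖ is the operator norm and the set {j : ω_j ≤ ω₀} is assumed finite. (This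 is the rapid-decay estimate r_Λ(ω, ω₀) ≤ C_s (ω₀/ω)^s of Lemma 3, obtained from the boundedness of λ^s Λ λ^{-s}.) -/
/-! Expand everything in the Hilbert basis `e`. On the modes with `ω_j ≤ ω₀` the diagonal
operator `T_s` has eigenvalues `ω_j^{-s} ≥ ω₀^{-s}`, so `f = T_s g` with `‖g‖ ≤ ω₀^s ‖f‖`, and
`Λ f = T_s (Λ_s g)`. The complementary projection `Id - Π_ω` keeps exactly the modes with
`ω_j > ω`, where `T_s` has eigenvalues at most `ω^{-s}`; hence
`‖(Id - Π_ω) Λ f‖ ≤ ω^{-s} ‖Λ_s g‖ ≤ ω^{-s} ‖Λ_s‖ ω₀^s ‖f‖`. Coefficientwise bounds become norm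
bounds through the isometry of `H` with `ℓ²`. -/

open Submodule
open scoped InnerProductSpace

section

variable {ι 𝕜 E : Type*} [RCLike 𝕜] [NormedAddCommGroup E] [InnerProductSpace 𝕜 E]

theorem Orthonormal.inner_eq_of_hasSum {v : ι → E} (hv : Orthonormal 𝕜 v) {c : ι → 𝕜} {x : E}
    (hx : HasSum (fun j => c j • v j) x) (i : ι) : ⟪v i, x⟫_𝕜 = c i := by
  have hsingle : HasSum (fun j => ⟪v i, c j • v j⟫_𝕜) ⟪v i, c i • v i⟫_𝕜 :=
    hasSum_single i fun j hj => by rw [inner_smul_right, hv.inner_eq_zero hj.symm, mul_zero]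
  refine (((innerSL 𝕜 (v i)).hasSum hx).unique hsingle).trans ?_
  simp [inner_smul_right, inner_self_eq_norm_sq_to_K, hv.1 i]

theorem Orthonormal.inner_eq_zero_of_mem_closure_span {v : ι → E} (hv : Orthonormal 𝕜 v)
    {S : Set ι} {i : ι} (hi : i ∉ S) {x : E}
    (hx : x ∈ (span 𝕜 (v '' S)).topologicalClosure) : ⟪v i, x⟫_𝕜 = 0 := by
  have hker : (span 𝕜 (v '' S)).topologicalClosure ≤
      LinearMap.ker (innerSL 𝕜 (v i) : E →ₗ[𝕜] 𝕜) := by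
    refine topologicalClosure_minimal _ (span_le.mpr ?_) (innerSL 𝕜 (v i)).isClosed_ker
    rintro _ ⟨j, hj, rfl⟩
    exact hv.inner_eq_zero (ne_of_mem_of_not_mem hj hi).symm
  exact hker hx

theorem ContinuousLinearMap.inner_sub_apply_eq_zero_of_mem_range [CompleteSpace E]
    {P : E →L[𝕜] E} (hidem : IsIdempotentElem P) (hsa : IsSelfAdjoint P) {v : E}
    (hv : v ∈ Set.range P) (x : E) :
    ⟪v, x - P x⟫_𝕜 = 0 := by
  obtain ⟨z, rfl⟩ := hv
  have hPP : P (P x) = P x := congr($hidem x)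
  have hsym : ∀ u w, ⟪P u, w⟫_𝕜 = ⟪u, P w⟫_𝕜 := hsa.isSymmetric
  rw [inner_sub_right, hsym, hsym, hPP, sub_self]

namespace HilbertBasis

variable (b : HilbertBasis ι 𝕜 E)

theorem norm_le_of_forall_norm_inner_le {x y : E} {C : ℝ} (hC : 0 ≤ C)
    (h : ∀ i, ‖⟪b i, y⟫_𝕜‖ ≤ C * ‖⟪b i, x⟫_𝕜‖) : ‖y‖ ≤ C * ‖x‖ := by
  rw [← b.repr.norm_map y, ← b.repr.norm_map x]
  calc ‖b.repr y‖ ≤ ‖(C : 𝕜) • b.repr x‖ :=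
        lp.norm_mono two_ne_zero fun i => by
          simpa [b.repr_apply_apply, norm_smul, abs_of_nonneg hC] using h i
    _ = C * ‖b.repr x‖ := by rw [lp.norm_const_smul two_ne_zero]; simp [abs_of_nonneg hC]

variable {b} {T : E →L[𝕜] E} {μ : ι → 𝕜}

theorem inner_apply_of_apply_eq_smul (hT : ∀ i, T (b i) = μ i • b i) (x : E) (i : ι) :
    ⟪b i, T x⟫_𝕜 = μ i * ⟪b i, x⟫_𝕜 := by
  have hTx := T.hasSum (b.hasSum_repr x)
  simp_rw [map_smul, hT, smul_smul] at hTx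
  rw [b.orthonormal.inner_eq_of_hasSum hTx i, b.repr_apply_apply, mul_comm]

theorem exists_preimage_norm_le_of_mem_closure_span (hT : ∀ i, T (b i) = μ i • b i)
    {S : Set ι} {C : ℝ} (hC : 0 < C) (hμ : ∀ i ∈ S, C⁻¹ ≤ ‖μ i‖) {f : E}
    (hf : f ∈ (span 𝕜 (b '' S)).topologicalClosure) :
    ∃ g, T g = f ∧ ‖g‖ ≤ C * ‖f‖ := by
  have hfS : ∀ i ∉ S, ⟪b i, f⟫_𝕜 = 0 := fun i hi =>
    b.orthonormal.inner_eq_zero_of_mem_closure_span hi hf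
  have hμS : ∀ i ∈ S, μ i ≠ 0 := fun i hi =>
    norm_pos_iff.mp ((inv_pos.mpr hC).trans_le (hμ i hi))
  set c : ι → 𝕜 := fun i => (μ i)⁻¹ * ⟪b i, f⟫_𝕜
  have hc : ∀ i, ‖c i‖ ≤ C * ‖⟪b i, f⟫_𝕜‖ := by
    intro i
    by_cases hi : i ∈ S
    · rw [norm_mul, norm_inv]
      gcongr
      exact inv_le_of_inv_le₀ hC (hμ i hi)
    · simp [c, hfS i hi]
  have hcmem : Memℓp c 2 :=
    ((lp.memℓp (b.repr f)).const_smul (C : 𝕜)).mono' fun i => by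
      simpa [b.repr_apply_apply, norm_smul, abs_of_pos hC] using hc i
  set g := b.repr.symm ⟨c, hcmem⟩
  have hg : ∀ i, ⟪b i, g⟫_𝕜 = c i := fun i => by
    rw [← b.repr_apply_apply, LinearIsometryEquiv.apply_symm_apply]
  refine ⟨g, b.repr.injective (lp.ext (funext fun i => ?_)), ?_⟩
  · simp only [b.repr_apply_apply, inner_apply_of_apply_eq_smul hT, hg, c]
    by_cases hi : i ∈ S
    · exact mul_inv_cancel_left₀ (hμS i hi) _
    · simp [hfS i hi]
  · exact b.norm_le_of_forall_norm_inner_le hC.le fun i => hg i ▸ hc i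

theorem norm_sub_apply_le_of_range_eq [CompleteSpace E] (hT : ∀ i, T (b i) = μ i • b i)
    {P : E →L[𝕜] E} (hidem : IsIdempotentElem P) (hsa : IsSelfAdjoint P) {S : Set ι}
    (hrange : Set.range P = (span 𝕜 (b '' S)).topologicalClosure) {C : ℝ} (hC : 0 ≤ C)
    (hμ : ∀ i ∉ S, ‖μ i‖ ≤ C) (x : E) : ‖T x - P (T x)‖ ≤ C * ‖x‖ := by
  refine b.norm_le_of_forall_norm_inner_le hC fun i => ?_
  by_cases hi : i ∈ S
  · have hmem : b i ∈ Set.range P := by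
      rw [hrange]
      exact le_topologicalClosure _ (subset_span (Set.mem_image_of_mem b hi))
    rw [P.inner_sub_apply_eq_zero_of_mem_range hidem hsa hmem, norm_zero]
    positivity
  · have hP : P (T x) ∈ (span 𝕜 (b '' S)).topologicalClosure := by
      rw [← SetLike.mem_coe, ← hrange]
      exact Set.mem_range_self _
    rw [inner_sub_right, b.orthonormal.inner_eq_zero_of_mem_closure_span hi hP, sub_zero,
      inner_apply_of_apply_eq_smul hT, norm_mul]
    exact mul_le_mul_of_nonneg_right (hμ i hi) (norm_nonneg _)

end HilbertBasis

end

theorem high_frequency_decay_general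
    {H : Type*} [NormedAddCommGroup H] [InnerProductSpace ℂ H] [CompleteSpace H]
    (e : ℕ → H) (he : Orthonormal ℂ e)
    (hbasis : (Submodule.span ℂ (Set.range e)).topologicalClosure = ⊤)
    (ω : ℕ → ℝ) (hω : ∀ j, 0 < ω j)
    (s : ℝ) (hs : 0 ≤ s)
    (Ts Λ Λs : H →L[ℂ] H)
    (hTs : ∀ j, Ts (e j) = ((ω j) ^ (-s) : ℝ) • e j)
    (hcomm : Λ.comp Ts = Ts.comp Λs)
    (ω₀ ωc : ℝ) (hω₀ : 0 < ω₀) (hle : ω₀ ≤ ωc)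
    (Pi : H →L[ℂ] H) (hidem : IsIdempotentElem Pi) (hsa : IsSelfAdjoint Pi)
    (hrange : Set.range Pi =
      ((Submodule.span ℂ (e '' {j : ℕ | ω j ≤ ωc})).topologicalClosure : Set H)) :
    ∀ f ∈ Submodule.span ℂ (e '' {j : ℕ | ω j ≤ ω₀}),
      ‖Λ f - Pi (Λ f)‖ ≤ ‖Λs‖ * (ω₀ / ωc) ^ s * ‖f‖ := by
  intro f hf
  have hωc : 0 < ωc := hω₀.trans_le hle
  obtain ⟨b, rfl⟩ : ∃ b : HilbertBasis ℕ ℂ H, ⇑b = e :=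
    ⟨HilbertBasis.mk he hbasis.ge, HilbertBasis.coe_mk _ _⟩
  have hT : ∀ j, Ts (b j) = ((ω j ^ (-s) : ℝ) : ℂ) • b j := fun j => by
    rw [hTs, Complex.coe_smul]
  have hμ : ∀ j, ‖((ω j ^ (-s) : ℝ) : ℂ)‖ = ω j ^ (-s) := fun j => by
    rw [Complex.norm_real, Real.norm_of_nonneg (Real.rpow_nonneg (hω j).le _)]
  have hlow : ∀ j ∈ {j | ω j ≤ ω₀}, (ω₀ ^ s)⁻¹ ≤ ‖((ω j ^ (-s) : ℝ) : ℂ)‖ := fun j hj => by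
    rw [hμ, ← Real.rpow_neg hω₀.le]
    exact Real.rpow_le_rpow_of_nonpos (hω j) hj (neg_nonpos.mpr hs)
  have hhigh : ∀ j ∉ {j | ω j ≤ ωc}, ‖((ω j ^ (-s) : ℝ) : ℂ)‖ ≤ ωc ^ (-s) := fun j hj => by
    rw [hμ]
    exact Real.rpow_le_rpow_of_nonpos hωc (not_le.mp hj).le (neg_nonpos.mpr hs)
  obtain ⟨g, rfl, hg⟩ := b.exists_preimage_norm_le_of_mem_closure_span hT
    (Real.rpow_pos_of_pos hω₀ s) hlow (le_topologicalClosure _ hf)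
  have htail := b.norm_sub_apply_le_of_range_eq hT hidem hsa hrange
    (Real.rpow_nonneg hωc.le (-s)) hhigh (Λs g)
  calc ‖Λ (Ts g) - Pi (Λ (Ts g))‖ ≤ ωc ^ (-s) * ‖Λs g‖ := DFunLike.congr_fun hcomm g ▸ htail
    _ ≤ ωc ^ (-s) * (‖Λs‖ * (ω₀ ^ s * ‖Ts g‖)) := by gcongr; exact Λs.le_opNorm_of_le hg
    _ = ‖Λs‖ * (ω₀ / ωc) ^ s * ‖Ts g‖ := by
      rw [Real.div_rpow hω₀.le hωc.le, Real.rpow_neg hωc.le]; ring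

/-- The rapid-decay estimate `r_Λ(ω, ω₀) ≤ C_s (ω₀/ω)^s` of Lemma 3: if `λ^s Λ λ^{-s} = Λ_s`
is bounded, then for data `f` spanned by eigenvectors of frequency at most `ω₀`, the
high-frequency part of `Λ f` beyond the cutoff `ω` is bounded by `‖Λ_s‖ (ω₀/ω)^s ‖f‖`. -/
theorem high_frequency_decay
    {H : Type*} [NormedAddCommGroup H] [InnerProductSpace ℂ H] [CompleteSpace H]
    (e : ℕ → H) (he : Orthonormal ℂ e)
    (hbasis : (Submodule.span ℂ (Set.range e)).topologicalClosure = ⊤)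
    (ω : ℕ → ℝ) (hω : ∀ j, 0 < ω j)
    (s : ℝ) (hs : 0 ≤ s)
    (Ts Λ Λs : H →L[ℂ] H)
    (hTs : ∀ j, Ts (e j) = ((ω j) ^ (-s) : ℝ) • e j)
    (hcomm : Λ.comp Ts = Ts.comp Λs)
    (ω₀ ωc : ℝ) (hω₀ : 0 < ω₀) (hle : ω₀ ≤ ωc)
    (hfin : {j : ℕ | ω j ≤ ω₀}.Finite)
    (Pi : H →L[ℂ] H) (hidem : IsIdempotentElem Pi) (hsa : IsSelfAdjoint Pi)
    (hrange : Set.range Pi =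
      ((Submodule.span ℂ (e '' {j : ℕ | ω j ≤ ωc})).topologicalClosure : Set H)) :
    ∀ f ∈ Submodule.span ℂ (e '' {j : ℕ | ω j ≤ ω₀}),
      ‖Λ f - Pi (Λ f)‖ ≤ ‖Λs‖ * (ω₀ / ωc) ^ s * ‖f‖ :=
  high_frequency_decay_general e he hbasis ω hω s hs Ts Λ Λs hTs hcomm ω₀ ωc hω₀ hle Pi hidem hsa
    hrange
end
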